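/- arXiv:2502.03095 — 7 statements merged into one kernel-verified Lean document; each statement's English description precedes it below -/
import Mathlib

section
/- Define the Reward-Difference-Approximation loss of a positive policy π by L_RDA(π) = Σ_{x∈X} 𝒟(x) · Σ_{y₁,y₂∈Y} π(y₁|x)·π(y₂|x) · ((1/τ)·log(π(y₁|x)/π(y₂|x)) − (r(x,y₁) − r(x,y₂)))². Then L_RDA(π) ≥ 0 for every positive policy π, L_RDA(π^τ) = 0, and L_RDA(π) = 0 implies π(·|x) = π^τ(·|x) for every x with 𝒟(x) > 0; hence π^τ is the minimizer of L_RDA. -/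
/-!
At the Boltzmann policy every log-ratio `log (π y₁ / π y₂)` equals `τ (r y₁ - r y₂)`, so every
residual of the loss vanishes. Conversely the loss is a sum of squares with positive weights, so
it vanishes exactly when all residuals do; then `log π - τ r` is constant in `y`, i.e. `π` is
proportional to `exp (τ r)`, and normalisation forces `π = π^τ`.
-/

namespace RewardDifference

open Real Finset

variable {Y : Type*} [Fintype Y]

noncomputable def boltzmann (s : Y → ℝ) (y : Y) : ℝ :=
  exp (s y) / ∑ y', exp (s y')

/-- The summand of `L_RDA` at a single `x`, without the weight `𝒟 x`. -/
noncomputable def rdaLoss (τ : ℝ) (r p : Y → ℝ) : ℝ :=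
  ∑ y₁, ∑ y₂, p y₁ * p y₂ * ((1 / τ) * log (p y₁ / p y₂) - (r y₁ - r y₂)) ^ 2

lemma sum_exp_pos (s : Y → ℝ) (y : Y) : 0 < ∑ y', exp (s y') :=
  (exp_pos (s y)).trans_le (single_le_sum (fun y' _ => (exp_pos (s y')).le) (mem_univ y))

lemma log_boltzmann_div (s : Y → ℝ) (y₁ y₂ : Y) :
    log (boltzmann s y₁ / boltzmann s y₂) = s y₁ - s y₂ := by
  have hZ := (sum_exp_pos s y₁).ne'
  rw [boltzmann, boltzmann, div_div_div_cancel_right₀ hZ, ← exp_sub, log_exp]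

lemma eq_boltzmann_of_log_div_eq {p s : Y → ℝ} (hp : ∀ y, 0 < p y) (hsum : ∑ y, p y = 1)
    (h : ∀ y₁ y₂, log (p y₁ / p y₂) = s y₁ - s y₂) : p = boltzmann s := by
  funext y
  have hcross : ∀ y', p y * exp (s y') = exp (s y) * p y' := fun y' => by
    have := h y y'
    rw [log_div (hp y).ne' (hp y').ne', sub_eq_sub_iff_sub_eq_sub] at this
    rw [← exp_log (hp y), ← exp_log (hp y'), ← exp_add, ← exp_add]
    congr 1
    linarith
  rw [boltzmann, eq_div_iff (sum_exp_pos s y).ne', mul_sum]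
  simp_rw [hcross, ← mul_sum, hsum, mul_one]

lemma rdaLoss_nonneg (τ : ℝ) (r : Y → ℝ) {p : Y → ℝ} (hp : ∀ y, 0 ≤ p y) :
    0 ≤ rdaLoss τ r p :=
  sum_nonneg fun y₁ _ => sum_nonneg fun y₂ _ =>
    mul_nonneg (mul_nonneg (hp y₁) (hp y₂)) (sq_nonneg _)

lemma rdaLoss_eq_zero_iff {τ : ℝ} (hτ : τ ≠ 0) (r : Y → ℝ) {p : Y → ℝ} (hp : ∀ y, 0 < p y) :
    rdaLoss τ r p = 0 ↔ ∀ y₁ y₂, log (p y₁ / p y₂) = τ * r y₁ - τ * r y₂ := by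
  have hweight : ∀ y₁ y₂, 0 < p y₁ * p y₂ := fun y₁ y₂ => mul_pos (hp y₁) (hp y₂)
  have hsummand : ∀ y₁ y₂,
      0 ≤ p y₁ * p y₂ * ((1 / τ) * log (p y₁ / p y₂) - (r y₁ - r y₂)) ^ 2 :=
    fun y₁ y₂ => mul_nonneg (hweight y₁ y₂).le (sq_nonneg _)
  simp only [rdaLoss,
    sum_eq_zero_iff_of_nonneg fun y₁ _ => sum_nonneg fun y₂ _ => hsummand y₁ y₂,
    sum_eq_zero_iff_of_nonneg fun y₂ _ => hsummand _ y₂, mem_univ, true_implies, mul_eq_zero,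
    (hweight _ _).ne', false_or, pow_eq_zero_iff two_ne_zero]
  refine forall₂_congr fun y₁ y₂ => ?_
  rw [sub_eq_zero, ← mul_sub, one_div, inv_mul_eq_iff_eq_mul₀ hτ]

lemma rdaLoss_boltzmann {τ : ℝ} (hτ : τ ≠ 0) (r : Y → ℝ) :
    rdaLoss τ r (boltzmann (τ * r ·)) = 0 :=
  (rdaLoss_eq_zero_iff hτ r fun y => div_pos (exp_pos _) (sum_exp_pos _ y)).2
    (log_boltzmann_div _)

end RewardDifference

open RewardDifference

theorem reward_difference_approximation_target_distribution_general
    {X Y : Type*} [Fintype X] [Fintype Y]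
    (r : X → Y → ℝ) (τ : ℝ) (hτ : 0 < τ)
    (D : X → ℝ) (hD0 : ∀ x, 0 ≤ D x)
    (πt : X → Y → ℝ)
    (hπt : ∀ x y, πt x y = Real.exp (τ * r x y) / ∑ y' : Y, Real.exp (τ * r x y'))
    (LRDA : (X → Y → ℝ) → ℝ)
    (hLRDA : ∀ p : X → Y → ℝ,
      LRDA p = ∑ x : X, D x * ∑ y₁ : Y, ∑ y₂ : Y,
        p x y₁ * p x y₂ *
          ((1 / τ) * Real.log (p x y₁ / p x y₂) - (r x y₁ - r x y₂)) ^ 2) :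
    LRDA πt = 0 ∧
    ∀ π : X → Y → ℝ, (∀ x y, 0 < π x y) → (∀ x, ∑ y : Y, π x y = 1) →
      0 ≤ LRDA π ∧
      (LRDA π = 0 → ∀ x, 0 < D x → π x = πt x) := by
  have hπt_eq : ∀ x, πt x = boltzmann (τ * r x ·) := fun x => funext (hπt x)
  have hLRDA_eq : ∀ p, LRDA p = ∑ x, D x * rdaLoss τ (r x) (p x) := hLRDA
  refine ⟨?_, fun π hpos hsum => ?_⟩
  · rw [hLRDA_eq]
    exact Finset.sum_eq_zero fun x _ => by rw [hπt_eq, rdaLoss_boltzmann hτ.ne', mul_zero]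
  have hnonneg : ∀ x, 0 ≤ D x * rdaLoss τ (r x) (π x) := fun x =>
    mul_nonneg (hD0 x) (rdaLoss_nonneg τ (r x) fun y => (hpos x y).le)
  refine ⟨hLRDA_eq π ▸ Finset.sum_nonneg fun x _ => hnonneg x, fun hzero x hDx => ?_⟩
  rw [hLRDA_eq, Finset.sum_eq_zero_iff_of_nonneg fun x _ => hnonneg x] at hzero
  have hloss : rdaLoss τ (r x) (π x) = 0 :=
    (mul_eq_zero.1 (hzero x (Finset.mem_univ x))).resolve_left hDx.ne'
  rw [hπt_eq]
  exact eq_boltzmann_of_log_div_eq (hpos x) (hsum x)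
    ((rdaLoss_eq_zero_iff hτ.ne' (r x) (hpos x)).1 hloss)

/-- The Reward-Difference-Approximation loss is nonnegative, vanishes
at the Boltzmann policy π^τ, and vanishing forces π(·|x) = π^τ(·|x) wherever
𝒟(x) > 0; hence π^τ is the minimizer of L_RDA. -/
theorem reward_difference_approximation_target_distribution
    {X Y : Type*} [Fintype X] [Fintype Y] [Nonempty X] [Nonempty Y]
    (r : X → Y → ℝ) (τ : ℝ) (hτ : 0 < τ)
    (D : X → ℝ) (hD0 : ∀ x, 0 ≤ D x) (hD1 : ∑ x : X, D x = 1)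
    (πt : X → Y → ℝ)
    (hπt : ∀ x y, πt x y = Real.exp (τ * r x y) / ∑ y' : Y, Real.exp (τ * r x y'))
    (LRDA : (X → Y → ℝ) → ℝ)
    (hLRDA : ∀ p : X → Y → ℝ,
      LRDA p = ∑ x : X, D x * ∑ y₁ : Y, ∑ y₂ : Y,
        p x y₁ * p x y₂ *
          ((1 / τ) * Real.log (p x y₁ / p x y₂) - (r x y₁ - r x y₂)) ^ 2) :
    LRDA πt = 0 ∧
    ∀ π : X → Y → ℝ, (∀ x y, 0 < π x y) → (∀ x, ∑ y : Y, π x y = 1) →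
      0 ≤ LRDA π ∧
      (LRDA π = 0 → ∀ x, 0 < D x → π x = πt x) :=
  reward_difference_approximation_target_distribution_general r τ hτ D hD0 πt hπt LRDA hLRDA
end

section
/- Let ω : ℝ × ℝ → (0,1) satisfy the symmetric complementarity property ω(a,b) = 1 − ω(b,a) for all a, b. Define the true comparison probability p*(x,y₁,y₂) = ω(r(x,y₁), r(x,y₂)), the implicit reward of a positive policy π by r_π(x,y) = (1/τ)·log(Z(x)·π(y|x)), the model comparison probability p_π(x,y₁,y₂) = ω(r_π(x,y₁), r_π(x,y₂)), and the PRA loss L_PRA(π) = Σ_{x∈X} 𝒟(x) · Σ_{y₁,y₂∈Y} π(y₁|x)·π(y₂|x) · [p*(x,y₁,y₂)·log(p*(x,y₁,y₂)/p_π(x,y₁,y₂)) + (1 − p*(x,y₁,y₂))·log((1 − p*(x,y₁,y₂))/(1 − p_π(x,y₁,y₂)))]. Then L_PRA(π) ≥ 0 for every positive policy π and L_PRA(π^τ) = 0; hence π^τ is a global minimizer of L_PRA. -/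
/-!
Each summand of `L_PRA` is a binary Kullback–Leibler divergence between the Bernoulli laws with
parameters `p*` and `p_π`, weighted by nonnegative factors, so the loss is nonnegative (Gibbs).
At the Boltzmann policy the implicit reward `(1/τ) log (Z π^τ)` is exactly `r`, hence `p_π = p*`
and every divergence vanishes.
-/

noncomputable section

open Real InformationTheory

def binaryKL (p q : ℝ) : ℝ :=
  p * log (p / q) + (1 - p) * log ((1 - p) / (1 - q))

lemma binaryKL_eq_klFun {p q : ℝ} (hq0 : 0 < q) (hq1 : q < 1) :
    binaryKL p q = q * klFun (p / q) + (1 - q) * klFun ((1 - p) / (1 - q)) := by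
  have hq1' : (1 - q) ≠ 0 := by linarith
  simp only [binaryKL, klFun]
  field_simp
  ring

lemma binaryKL_nonneg {p q : ℝ} (hp0 : 0 ≤ p) (hp1 : p ≤ 1) (hq0 : 0 < q) (hq1 : q < 1) :
    0 ≤ binaryKL p q := by
  have hq1' : 0 < 1 - q := by linarith
  rw [binaryKL_eq_klFun hq0 hq1]
  have h_one := klFun_nonneg (div_nonneg hp0 hq0.le)
  have h_zero := klFun_nonneg (div_nonneg (sub_nonneg.mpr hp1) hq1'.le)
  positivity

@[simp]
lemma binaryKL_self (p : ℝ) : binaryKL p p = 0 := by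
  simp [binaryKL]

lemma one_div_mul_log_mul_exp_mul_div {τ Z : ℝ} (hτ : τ ≠ 0) (hZ : Z ≠ 0) (a : ℝ) :
    1 / τ * log (Z * (exp (τ * a) / Z)) = a := by
  rw [mul_div_cancel₀ _ hZ, log_exp]
  field_simp

end

theorem pra_target_distribution_general
    {X Y : Type*} [Fintype X] [Fintype Y] [Nonempty Y]
    (r : X → Y → ℝ) (τ : ℝ) (hτ : 0 < τ)
    (D : X → ℝ) (hD0 : ∀ x, 0 ≤ D x)
    (ω : ℝ → ℝ → ℝ)
    (hω0 : ∀ a b, 0 < ω a b) (hω1 : ∀ a b, ω a b < 1)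
    (Z : X → ℝ) (hZ : ∀ x, Z x = ∑ y' : Y, Real.exp (τ * r x y'))
    (πt : X → Y → ℝ)
    (hπt : ∀ x y, πt x y = Real.exp (τ * r x y) / Z x)
    (pstar : X → Y → Y → ℝ)
    (hpstar : ∀ x y₁ y₂, pstar x y₁ y₂ = ω (r x y₁) (r x y₂))
    (rimp : (X → Y → ℝ) → X → Y → ℝ)
    (hrimp : ∀ p x y, rimp p x y = (1 / τ) * Real.log (Z x * p x y))
    (pmod : (X → Y → ℝ) → X → Y → Y → ℝ)
    (hpmod : ∀ p x y₁ y₂, pmod p x y₁ y₂ = ω (rimp p x y₁) (rimp p x y₂))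
    (LPRA : (X → Y → ℝ) → ℝ)
    (hLPRA : ∀ p : X → Y → ℝ,
      LPRA p = ∑ x : X, D x * ∑ y₁ : Y, ∑ y₂ : Y,
        p x y₁ * p x y₂ *
          (pstar x y₁ y₂ * Real.log (pstar x y₁ y₂ / pmod p x y₁ y₂) +
           (1 - pstar x y₁ y₂) *
             Real.log ((1 - pstar x y₁ y₂) / (1 - pmod p x y₁ y₂)))) :
    (∀ π : X → Y → ℝ, (∀ x y, 0 < π x y) → (∀ x, ∑ y : Y, π x y = 1) →
      0 ≤ LPRA π) ∧
    LPRA πt = 0 := by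
  simp only [← binaryKL.eq_1] at hLPRA
  refine ⟨fun π hπ _ => ?_, ?_⟩
  · rw [hLPRA]
    refine Finset.sum_nonneg fun x _ => mul_nonneg (hD0 x) <|
      Finset.sum_nonneg fun y₁ _ => Finset.sum_nonneg fun y₂ _ =>
        mul_nonneg (mul_pos (hπ x y₁) (hπ x y₂)).le ?_
    rw [hpstar, hpmod]
    exact binaryKL_nonneg (hω0 _ _).le (hω1 _ _).le (hω0 _ _) (hω1 _ _)
  · have hZpos : ∀ x, 0 < Z x := fun x => hZ x ▸
      Finset.sum_pos (fun y _ => Real.exp_pos _) Finset.univ_nonempty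
    have hrimp_πt : ∀ x y, rimp πt x y = r x y := fun x y => by
      rw [hrimp, hπt, one_div_mul_log_mul_exp_mul_div hτ.ne' (hZpos x).ne']
    have hpmod_πt : pmod πt = pstar := by
      ext x y₁ y₂
      rw [hpmod, hpstar, hrimp_πt, hrimp_πt]
    simp [hLPRA, hpmod_πt]

/-- The Preference-Reward-Approximation (PRA) loss, built from any
comparison model ω with values in (0,1) satisfying the symmetric complementarity
property ω(a,b) = 1 − ω(b,a), is nonnegative for every positive policy and vanishes
at the Boltzmann policy π^τ; hence π^τ is a global minimizer of L_PRA. -/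
theorem pra_target_distribution
    {X Y : Type*} [Fintype X] [Fintype Y] [Nonempty X] [Nonempty Y]
    (r : X → Y → ℝ) (τ : ℝ) (hτ : 0 < τ)
    (D : X → ℝ) (hD0 : ∀ x, 0 ≤ D x) (hD1 : ∑ x : X, D x = 1)
    (ω : ℝ → ℝ → ℝ)
    (hω0 : ∀ a b, 0 < ω a b) (hω1 : ∀ a b, ω a b < 1)
    (hωsym : ∀ a b, ω a b = 1 - ω b a)
    (Z : X → ℝ) (hZ : ∀ x, Z x = ∑ y' : Y, Real.exp (τ * r x y'))
    (πt : X → Y → ℝ)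
    (hπt : ∀ x y, πt x y = Real.exp (τ * r x y) / Z x)
    (pstar : X → Y → Y → ℝ)
    (hpstar : ∀ x y₁ y₂, pstar x y₁ y₂ = ω (r x y₁) (r x y₂))
    (rimp : (X → Y → ℝ) → X → Y → ℝ)
    (hrimp : ∀ p x y, rimp p x y = (1 / τ) * Real.log (Z x * p x y))
    (pmod : (X → Y → ℝ) → X → Y → Y → ℝ)
    (hpmod : ∀ p x y₁ y₂, pmod p x y₁ y₂ = ω (rimp p x y₁) (rimp p x y₂))
    (LPRA : (X → Y → ℝ) → ℝ)
    (hLPRA : ∀ p : X → Y → ℝ,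
      LPRA p = ∑ x : X, D x * ∑ y₁ : Y, ∑ y₂ : Y,
        p x y₁ * p x y₂ *
          (pstar x y₁ y₂ * Real.log (pstar x y₁ y₂ / pmod p x y₁ y₂) +
           (1 - pstar x y₁ y₂) *
             Real.log ((1 - pstar x y₁ y₂) / (1 - pmod p x y₁ y₂)))) :
    (∀ π : X → Y → ℝ, (∀ x y, 0 < π x y) → (∀ x, ∑ y : Y, π x y = 1) →
      0 ≤ LPRA π) ∧
    LPRA πt = 0 :=
  pra_target_distribution_general r τ hτ D hD0 ω hω0 hω1 Z hZ πt hπt pstar hpstar rimp hrimp pmod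
    hpmod LPRA hLPRA
end

section
/- Define the posterior Reward-Approximation loss of a positive policy π by L_RA-P(π) = Σ_{x∈X} 𝒟(x) · Σ_{y∈Y} π(y|x) · ((1/τ)·log(Z'(x)·π(y|x)/π_ref(y|x)) − r(x,y))². Then L_RA-P(π) ≥ 0 for every positive policy π, L_RA-P(π̄^τ) = 0, and L_RA-P(π) = 0 implies π(·|x) = π̄^τ(·|x) for every x with 𝒟(x) > 0; hence π̄^τ is the minimizer of L_RA-P. -/
/-! The loss is a `𝒟 ⊗ π`-weighted sum of squared residuals `(1/τ) log (Z' π / π_ref) - r`, so it is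
nonnegative and vanishes exactly when every residual of positive weight vanishes. Exponentiating,
the residual at `(x, y)` vanishes iff `Z'(x) π(y|x) = π_ref(y|x) exp (τ r(x,y))`, i.e. iff
`π(y|x) = π̄^τ(y|x)`. -/

open Finset

section WeightedSquares

variable {X Y : Type*} [Fintype X] [Fintype Y] {D : X → ℝ} {w g : X → Y → ℝ}

theorem sum_mul_sum_mul_sq_nonneg (hD : ∀ x, 0 ≤ D x) (hw : ∀ x y, 0 ≤ w x y) :
    0 ≤ ∑ x, D x * ∑ y, w x y * g x y ^ 2 :=
  sum_nonneg fun x _ => mul_nonneg (hD x) (sum_nonneg fun y _ => mul_nonneg (hw x y) (sq_nonneg _))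

theorem eq_zero_of_sum_mul_sum_mul_sq_eq_zero (hD : ∀ x, 0 ≤ D x) (hw : ∀ x y, 0 ≤ w x y)
    (h : ∑ x, D x * ∑ y, w x y * g x y ^ 2 = 0) {x : X} {y : Y} (hDx : 0 < D x)
    (hwxy : 0 < w x y) : g x y = 0 := by
  have hinner : ∑ y, w x y * g x y ^ 2 = 0 := by
    have := (sum_eq_zero_iff_of_nonneg fun x _ => mul_nonneg (hD x)
      (sum_nonneg fun y _ => mul_nonneg (hw x y) (sq_nonneg (g x y)))).1 h x (mem_univ x)
    exact (mul_eq_zero.1 this).resolve_left hDx.ne'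
  have hterm := (sum_eq_zero_iff_of_nonneg fun y _ =>
    mul_nonneg (hw x y) (sq_nonneg (g x y))).1 hinner y (mem_univ y)
  exact pow_eq_zero_iff two_ne_zero |>.1 ((mul_eq_zero.1 hterm).resolve_left hwxy.ne')

end WeightedSquares

theorem inv_mul_log_sub_eq_zero_iff {τ Z p q ρ : ℝ} (hτ : τ ≠ 0) (hZ : 0 < Z) (hp : 0 < p)
    (hq : 0 < q) : 1 / τ * Real.log (Z * p / q) - ρ = 0 ↔ p = q * Real.exp (τ * ρ) / Z := by
  have hlog : 1 / τ * Real.log (Z * p / q) - ρ = 0 ↔ Real.log (Z * p / q) = τ * ρ := by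
    constructor <;> intro h
    · field_simp at h; linarith
    · rw [h]; field_simp; ring
  rw [hlog, ← Real.exp_eq_exp, Real.exp_log (by positivity), div_eq_iff hq.ne', eq_div_iff hZ.ne']
  constructor <;> intro h <;> linarith

theorem posterior_reward_approximation_target_distribution_general
    {X Y : Type*} [Fintype X] [Fintype Y]
    (r : X → Y → ℝ) (τ : ℝ) (hτ : 0 < τ)
    (D : X → ℝ) (hD0 : ∀ x, 0 ≤ D x)
    (πref : X → Y → ℝ)
    (hπref0 : ∀ x y, 0 < πref x y)
    (Z' : X → ℝ) (hZ' : ∀ x, Z' x = ∑ y' : Y, πref x y' * Real.exp (τ * r x y'))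
    (πbar : X → Y → ℝ)
    (hπbar : ∀ x y, πbar x y = πref x y * Real.exp (τ * r x y) / Z' x)
    (LRAP : (X → Y → ℝ) → ℝ)
    (hLRAP : ∀ p : X → Y → ℝ,
      LRAP p = ∑ x : X, D x * ∑ y : Y,
        p x y * ((1 / τ) * Real.log (Z' x * p x y / πref x y) - r x y) ^ 2) :
    LRAP πbar = 0 ∧
    ∀ π : X → Y → ℝ, (∀ x y, 0 < π x y) → (∀ x, ∑ y : Y, π x y = 1) →
      0 ≤ LRAP π ∧
      (LRAP π = 0 → ∀ x, 0 < D x → π x = πbar x) := by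
  have hZ'pos (x : X) (y : Y) : 0 < Z' x := by
    rw [hZ']
    exact sum_pos (fun y _ => mul_pos (hπref0 x y) (Real.exp_pos _)) ⟨y, mem_univ y⟩
  have hπbar_pos (x : X) (y : Y) : 0 < πbar x y := by
    rw [hπbar]; have := hZ'pos x y; have := hπref0 x y; positivity
  have residual_eq_zero_iff {x : X} {y : Y} {p : ℝ} (hp : 0 < p) :
      1 / τ * Real.log (Z' x * p / πref x y) - r x y = 0 ↔ p = πbar x y := by
    rw [hπbar, inv_mul_log_sub_eq_zero_iff hτ.ne' (hZ'pos x y) hp (hπref0 x y)]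
  refine ⟨?_, fun π hπ0 _ => ⟨?_, fun hL x hDx => funext fun y => ?_⟩⟩
  · rw [hLRAP]
    refine sum_eq_zero fun x _ => ?_
    rw [sum_eq_zero fun y _ => by rw [(residual_eq_zero_iff (hπbar_pos x y)).2 rfl]; ring, mul_zero]
  · rw [hLRAP]
    exact sum_mul_sum_mul_sq_nonneg hD0 fun x y => (hπ0 x y).le
  · rw [hLRAP] at hL
    exact (residual_eq_zero_iff (hπ0 x y)).1 <|
      eq_zero_of_sum_mul_sum_mul_sq_eq_zero hD0 (fun x y => (hπ0 x y).le) hL hDx (hπ0 x y)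

/-- The posterior Reward-Approximation loss is nonnegative, vanishes at
the posterior Boltzmann policy π̄^τ, and vanishing forces π(·|x) = π̄^τ(·|x) wherever
𝒟(x) > 0; hence π̄^τ is the minimizer of L_RA-P. -/
theorem posterior_reward_approximation_target_distribution
    {X Y : Type*} [Fintype X] [Fintype Y] [Nonempty X] [Nonempty Y]
    (r : X → Y → ℝ) (τ : ℝ) (hτ : 0 < τ)
    (D : X → ℝ) (hD0 : ∀ x, 0 ≤ D x) (hD1 : ∑ x : X, D x = 1)
    (πref : X → Y → ℝ)
    (hπref0 : ∀ x y, 0 < πref x y) (hπref1 : ∀ x, ∑ y : Y, πref x y = 1)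
    (Z' : X → ℝ) (hZ' : ∀ x, Z' x = ∑ y' : Y, πref x y' * Real.exp (τ * r x y'))
    (πbar : X → Y → ℝ)
    (hπbar : ∀ x y, πbar x y = πref x y * Real.exp (τ * r x y) / Z' x)
    (LRAP : (X → Y → ℝ) → ℝ)
    (hLRAP : ∀ p : X → Y → ℝ,
      LRAP p = ∑ x : X, D x * ∑ y : Y,
        p x y * ((1 / τ) * Real.log (Z' x * p x y / πref x y) - r x y) ^ 2) :
    LRAP πbar = 0 ∧
    ∀ π : X → Y → ℝ, (∀ x y, 0 < π x y) → (∀ x, ∑ y : Y, π x y = 1) →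
      0 ≤ LRAP π ∧
      (LRAP π = 0 → ∀ x, 0 < D x → π x = πbar x) :=
  posterior_reward_approximation_target_distribution_general r τ hτ D hD0 πref hπref0 Z' hZ' πbar
    hπbar LRAP hLRAP
end

section
/- Under the Bradley–Terry model p*(x,y₁,y₂) = σ(r(x,y₁) − r(x,y₂)), define for a positive policy π: h̄_π(x,y₁,y₂) = (1/τ)·(log(π(y₁|x)/π_ref(y₁|x)) − log(π(y₂|x)/π_ref(y₂|x))), the per-pair term ζ(π;x,y₁,y₂) = p*(x,y₁,y₂)·log σ(h̄_π(x,y₁,y₂)) + (1 − p*(x,y₁,y₂))·log σ(−h̄_π(x,y₁,y₂)), the entropy term M(x,y₁,y₂) = p*·log p* + (1 − p*)·log(1 − p*), the DPO loss L_DPO(π) = −Σ_{x∈X} 𝒟(x) Σ_{y₁,y₂∈Y} π₀(y₁|x)·π₀(y₂|x)·ζ(π;x,y₁,y₂), the PRA-P loss L_PRA-P(π) = Σ_{x∈X} 𝒟(x) Σ_{y₁,y₂∈Y} π(y₁|x)·π(y₂|x)·[p*·log(p*/σ(h̄_π(x,y₁,y₂))) + (1 − p*)·log((1 − p*)/σ(−h̄_π(x,y₁,y₂)))],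 the shift term η₁(π,π₀) = Σ_{x∈X} 𝒟(x) Σ_{y₁,y₂∈Y} (π₀(y₁|x)·π₀(y₂|x) − π(y₁|x)·π(y₂|x))·ζ(π;x,y₁,y₂), and the regularization term η₂(π) = Σ_{x∈X} 𝒟(x) Σ_{y₁,y₂∈Y} π(y₁|x)·π(y₂|x)·M(x,y₁,y₂). Then for every positive policy π the identity L_PRA-P(π) = L_DPO(π) + η₁(π,π₀) + η₂(π) holds, and η₁(π,π₀) = 0 whenever π = π₀. -/
/-!
Pointwise, the binary KL divergence of `p*` from `σ(h̄)` is the negative entropy of `p*` minus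
the cross-entropy term `ζ`; this only needs `σ` to take values in `(0, 1)`, so that no logarithm
meets `0`. Summing against the weights `π ⊗ π` and trading them for `π₀ ⊗ π₀` gives the
DPO loss, the correction `η₁` being exactly the change of weights.
-/

open Finset
open Real (log log_div sigmoid sigmoid_pos sigmoid_lt_one)

lemma mul_log_div_add_one_sub_mul_log_div {p s s' : ℝ} (hp : p ≠ 0) (hp' : 1 - p ≠ 0)
    (hs : s ≠ 0) (hs' : s' ≠ 0) :
    p * log (p / s) + (1 - p) * log ((1 - p) / s') =
      (p * log p + (1 - p) * log (1 - p)) - (p * log s + (1 - p) * log s') := by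
  rw [log_div hp hs, log_div hp' hs']
  ring

lemma sum_mul_sum_sum_mul_sub_eq {X Y R : Type*} [Fintype X] [Fintype Y] [CommRing R]
    (D : X → R) (q q₀ : X → Y → R) (M ζ : X → Y → Y → R) :
    ∑ x, D x * ∑ y₁, ∑ y₂, q x y₁ * q x y₂ * (M x y₁ y₂ - ζ x y₁ y₂) =
      -∑ x, D x * ∑ y₁, ∑ y₂, q₀ x y₁ * q₀ x y₂ * ζ x y₁ y₂ +
        ∑ x, D x * ∑ y₁, ∑ y₂, (q₀ x y₁ * q₀ x y₂ - q x y₁ * q x y₂) * ζ x y₁ y₂ +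
        ∑ x, D x * ∑ y₁, ∑ y₂, q x y₁ * q x y₂ * M x y₁ y₂ := by
  simp only [← sum_neg_distrib, ← sum_add_distrib, ← mul_neg, ← mul_add]
  congr! 4 with x _ y₁ _ y₂ _
  ring

theorem prap_dpo_decomposition_general
    {X Y : Type*} [Fintype X] [Fintype Y]
    (r : X → Y → ℝ)
    (D : X → ℝ)
    (π₀ : X → Y → ℝ)
    (σ : ℝ → ℝ) (hσ : ∀ t, σ t = (1 + Real.exp (-t))⁻¹)
    (pstar : X → Y → Y → ℝ)
    (hpstar : ∀ x y₁ y₂, pstar x y₁ y₂ = σ (r x y₁ - r x y₂))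
    (hbar : (X → Y → ℝ) → X → Y → Y → ℝ)
    (ζ : (X → Y → ℝ) → X → Y → Y → ℝ)
    (hζ : ∀ p x y₁ y₂, ζ p x y₁ y₂ =
      pstar x y₁ y₂ * Real.log (σ (hbar p x y₁ y₂)) +
      (1 - pstar x y₁ y₂) * Real.log (σ (-(hbar p x y₁ y₂))))
    (M : X → Y → Y → ℝ)
    (hM : ∀ x y₁ y₂, M x y₁ y₂ =
      pstar x y₁ y₂ * Real.log (pstar x y₁ y₂) +
      (1 - pstar x y₁ y₂) * Real.log (1 - pstar x y₁ y₂))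
    (LDPO : (X → Y → ℝ) → ℝ)
    (hLDPO : ∀ p : X → Y → ℝ,
      LDPO p = -∑ x : X, D x * ∑ y₁ : Y, ∑ y₂ : Y,
        π₀ x y₁ * π₀ x y₂ * ζ p x y₁ y₂)
    (LPRAP : (X → Y → ℝ) → ℝ)
    (hLPRAP : ∀ p : X → Y → ℝ,
      LPRAP p = ∑ x : X, D x * ∑ y₁ : Y, ∑ y₂ : Y,
        p x y₁ * p x y₂ *
          (pstar x y₁ y₂ * Real.log (pstar x y₁ y₂ / σ (hbar p x y₁ y₂)) +
           (1 - pstar x y₁ y₂) *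
             Real.log ((1 - pstar x y₁ y₂) / σ (-(hbar p x y₁ y₂)))))
    (η₁ : (X → Y → ℝ) → ℝ)
    (hη₁ : ∀ p : X → Y → ℝ,
      η₁ p = ∑ x : X, D x * ∑ y₁ : Y, ∑ y₂ : Y,
        (π₀ x y₁ * π₀ x y₂ - p x y₁ * p x y₂) * ζ p x y₁ y₂)
    (η₂ : (X → Y → ℝ) → ℝ)
    (hη₂ : ∀ p : X → Y → ℝ,
      η₂ p = ∑ x : X, D x * ∑ y₁ : Y, ∑ y₂ : Y,
        p x y₁ * p x y₂ * M x y₁ y₂) :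
    (∀ π : X → Y → ℝ, (∀ x y, 0 < π x y) → (∀ x, ∑ y : Y, π x y = 1) →
      LPRAP π = LDPO π + η₁ π + η₂ π) ∧
    η₁ π₀ = 0 := by
  obtain rfl : σ = sigmoid := funext hσ
  refine ⟨fun π _ _ => ?_, by simp [hη₁]⟩
  have pointwise : ∀ x y₁ y₂,
      pstar x y₁ y₂ * log (pstar x y₁ y₂ / sigmoid (hbar π x y₁ y₂)) +
        (1 - pstar x y₁ y₂) * log ((1 - pstar x y₁ y₂) / sigmoid (-(hbar π x y₁ y₂))) =
      M x y₁ y₂ - ζ π x y₁ y₂ := by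
    intro x y₁ y₂
    rw [hζ, hM, hpstar]
    exact mul_log_div_add_one_sub_mul_log_div (sigmoid_pos _).ne'
      (sub_ne_zero.2 (sigmoid_lt_one _).ne') (sigmoid_pos _).ne' (sigmoid_pos _).ne'
  rw [hLPRAP, hLDPO, hη₁, hη₂, ← sum_mul_sum_sum_mul_sub_eq]
  simp only [pointwise]

/-- Under the Bradley–Terry model, the PRA-P loss decomposes as
L_PRA-P(π) = L_DPO(π) + η₁(π,π₀) + η₂(π), where η₁ is the distribution-shift term
(vanishing when π = π₀) and η₂ is the entropy regularization term. -/
theorem prap_dpo_decomposition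
    {X Y : Type*} [Fintype X] [Fintype Y] [Nonempty X] [Nonempty Y]
    (r : X → Y → ℝ) (τ : ℝ) (hτ : 0 < τ)
    (D : X → ℝ) (hD0 : ∀ x, 0 ≤ D x) (hD1 : ∑ x : X, D x = 1)
    (πref π₀ : X → Y → ℝ)
    (hπref0 : ∀ x y, 0 < πref x y) (hπref1 : ∀ x, ∑ y : Y, πref x y = 1)
    (hπ₀0 : ∀ x y, 0 < π₀ x y) (hπ₀1 : ∀ x, ∑ y : Y, π₀ x y = 1)
    (σ : ℝ → ℝ) (hσ : ∀ t, σ t = (1 + Real.exp (-t))⁻¹)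
    (pstar : X → Y → Y → ℝ)
    (hpstar : ∀ x y₁ y₂, pstar x y₁ y₂ = σ (r x y₁ - r x y₂))
    (hbar : (X → Y → ℝ) → X → Y → Y → ℝ)
    (hhbar : ∀ p x y₁ y₂, hbar p x y₁ y₂ =
      (1 / τ) * (Real.log (p x y₁ / πref x y₁) - Real.log (p x y₂ / πref x y₂)))
    (ζ : (X → Y → ℝ) → X → Y → Y → ℝ)
    (hζ : ∀ p x y₁ y₂, ζ p x y₁ y₂ =
      pstar x y₁ y₂ * Real.log (σ (hbar p x y₁ y₂)) +
      (1 - pstar x y₁ y₂) * Real.log (σ (-(hbar p x y₁ y₂))))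
    (M : X → Y → Y → ℝ)
    (hM : ∀ x y₁ y₂, M x y₁ y₂ =
      pstar x y₁ y₂ * Real.log (pstar x y₁ y₂) +
      (1 - pstar x y₁ y₂) * Real.log (1 - pstar x y₁ y₂))
    (LDPO : (X → Y → ℝ) → ℝ)
    (hLDPO : ∀ p : X → Y → ℝ,
      LDPO p = -∑ x : X, D x * ∑ y₁ : Y, ∑ y₂ : Y,
        π₀ x y₁ * π₀ x y₂ * ζ p x y₁ y₂)
    (LPRAP : (X → Y → ℝ) → ℝ)
    (hLPRAP : ∀ p : X → Y → ℝ,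
      LPRAP p = ∑ x : X, D x * ∑ y₁ : Y, ∑ y₂ : Y,
        p x y₁ * p x y₂ *
          (pstar x y₁ y₂ * Real.log (pstar x y₁ y₂ / σ (hbar p x y₁ y₂)) +
           (1 - pstar x y₁ y₂) *
             Real.log ((1 - pstar x y₁ y₂) / σ (-(hbar p x y₁ y₂)))))
    (η₁ : (X → Y → ℝ) → ℝ)
    (hη₁ : ∀ p : X → Y → ℝ,
      η₁ p = ∑ x : X, D x * ∑ y₁ : Y, ∑ y₂ : Y,
        (π₀ x y₁ * π₀ x y₂ - p x y₁ * p x y₂) * ζ p x y₁ y₂)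
    (η₂ : (X → Y → ℝ) → ℝ)
    (hη₂ : ∀ p : X → Y → ℝ,
      η₂ p = ∑ x : X, D x * ∑ y₁ : Y, ∑ y₂ : Y,
        p x y₁ * p x y₂ * M x y₁ y₂) :
    (∀ π : X → Y → ℝ, (∀ x y, 0 < π x y) → (∀ x, ∑ y : Y, π x y = 1) →
      LPRAP π = LDPO π + η₁ π + η₂ π) ∧
    η₁ π₀ = 0 :=
  prap_dpo_decomposition_general r D π₀ σ hσ pstar hpstar hbar ζ hζ M hM LDPO hLDPO LPRAP hLPRAP η₁
    hη₁ η₂ hη₂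
end

section
/- Consider the DPO loss as a function of the tabular parameter θ : X × Y → ℝ via the softmax parametrization π_θ(y|x) = exp(θ(x,y))/Σ_{y'} exp(θ(x,y')): L_DPO(θ) = −Σ_{x∈X} 𝒟(x) Σ_{y₁,y₂∈Y} π₀(y₁|x)·π₀(y₂|x)·[p*(x,y₁,y₂)·log σ(h̄_θ(x,y₁,y₂)) + (1 − p*(x,y₁,y₂))·log σ(−h̄_θ(x,y₁,y₂))], where h̄_θ(x,y₁,y₂) = (1/τ)·(log(π_θ(y₁|x)/π_ref(y₁|x)) − log(π_θ(y₂|x)/π_ref(y₂|x))) and p*(x,y₁,y₂) = σ(r(x,y₁) − r(x,y₂)). Then L_DPO is (4/τ²)-smooth: for every θ : X × Y → ℝ and every direction z : X × Y → ℝ, the second derivative of L_DPO at θ satisfies |D²L_DPO(θ)(z,z)| ≤ (4/τ²)·Σ_{x,y} z(x,y)². -/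
/-!
Since the softmax normalizer cancels in `log (π_θ(y₁|x)/π_ref(y₁|x)) - log (π_θ(y₂|x)/π_ref(y₂|x))`,
the margin `h̄_θ(x,y₁,y₂)` is affine in `θ`, with linear part `(θ(x,y₁) - θ(x,y₂))/τ`. Hence
`L_DPO` is a nonnegatively weighted sum of logistic losses of affine functionals of `θ`, and its
second derivative in direction `z` is `Σ w · σ(h̄)(1 - σ(h̄)) · ((z(x,y₁) - z(x,y₂))/τ)²`.
Bounding `σ(1 - σ) ≤ 1/4` and the `π₀ ⊗ π₀`-average of `(z(x,y₁) - z(x,y₂))²` by twice a variance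
gives the claim.
-/

open Real Finset

/-- Binary cross-entropy of the logit `t` against the target probability `p`. -/
noncomputable def logisticLoss (p t : ℝ) : ℝ :=
  -(p * log (sigmoid t) + (1 - p) * log (sigmoid (-t)))

theorem hasDerivAt_log_sigmoid (t : ℝ) :
    HasDerivAt (fun s => log (sigmoid s)) (sigmoid (-t)) t := by
  convert (hasDerivAt_sigmoid t).log (sigmoid_pos t).ne' using 1
  field_simp [(sigmoid_pos t).ne']
  rw [sigmoid_neg]

theorem hasDerivAt_logisticLoss (p t : ℝ) : HasDerivAt (logisticLoss p) (sigmoid t - p) t := by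
  have h : HasDerivAt (logisticLoss p) _ t :=
    (((hasDerivAt_log_sigmoid t).const_mul p).add
      (((hasDerivAt_log_sigmoid (-t)).comp t (hasDerivAt_neg t)).const_mul (1 - p))).neg
  refine h.congr_deriv ?_
  rw [neg_neg, sigmoid_neg]
  ring

theorem sigmoid_mul_one_sub_sigmoid_le (t : ℝ) : sigmoid t * (1 - sigmoid t) ≤ 1 / 4 := by
  nlinarith [sq_nonneg (2 * sigmoid t - 1)]

section SecondDerivative

variable {E : Type*} [NormedAddCommGroup E] [NormedSpace ℝ E] {κ : Type*} [Fintype κ]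

theorem hasFDerivAt_sum_comp_clm {φ φ' : κ → ℝ → ℝ} (hφ : ∀ q t, HasDerivAt (φ q) (φ' q t) t)
    (A : κ → E →L[ℝ] ℝ) (θ : E) :
    HasFDerivAt (fun θ => ∑ q, φ q (A q θ)) (∑ q, φ' q (A q θ) • A q) θ :=
  HasFDerivAt.fun_sum fun q _ => (hφ q (A q θ)).comp_hasFDerivAt θ (A q).hasFDerivAt

theorem fderiv_fderiv_sum_comp_clm_apply {φ φ' φ'' : κ → ℝ → ℝ}
    (hφ : ∀ q t, HasDerivAt (φ q) (φ' q t) t) (hφ' : ∀ q t, HasDerivAt (φ' q) (φ'' q t) t)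
    (A : κ → E →L[ℝ] ℝ) (θ z : E) :
    fderiv ℝ (fderiv ℝ fun θ => ∑ q, φ q (A q θ)) θ z z = ∑ q, φ'' q (A q θ) * A q z ^ 2 := by
  have hD : fderiv ℝ (fun θ => ∑ q, φ q (A q θ)) = fun θ => ∑ q, φ' q (A q θ) • A q :=
    funext fun θ => (hasFDerivAt_sum_comp_clm hφ A θ).fderiv
  have hD2 : HasFDerivAt (fun θ => ∑ q, φ' q (A q θ) • A q)
      (∑ q, (φ'' q (A q θ) • A q).smulRight (A q)) θ :=
    HasFDerivAt.fun_sum fun q _ =>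
      ((hφ' q (A q θ)).comp_hasFDerivAt θ (A q).hasFDerivAt).smul_const (A q)
  rw [hD, hD2.fderiv]
  simp [sq, mul_assoc]

theorem fderiv_fderiv_sum_logisticLoss_apply (w p b : κ → ℝ) (A : κ → E →L[ℝ] ℝ) (θ z : E) :
    fderiv ℝ (fderiv ℝ fun θ => ∑ q, w q * logisticLoss (p q) (A q θ + b q)) θ z z
      = ∑ q, w q * (sigmoid (A q θ + b q) * (1 - sigmoid (A q θ + b q))) * A q z ^ 2 :=
  fderiv_fderiv_sum_comp_clm_apply (φ := fun q t => w q * logisticLoss (p q) (t + b q))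
    (fun q t => ((hasDerivAt_logisticLoss (p q) (t + b q)).comp_add_const t (b q)).const_mul (w q))
    (fun q t => (((hasDerivAt_sigmoid (t + b q)).comp_add_const t (b q)).sub_const (p q)).const_mul
      (w q)) A θ z

theorem abs_fderiv_fderiv_sum_logisticLoss_apply_le {w : κ → ℝ} (hw : ∀ q, 0 ≤ w q)
    (p b : κ → ℝ) (A : κ → E →L[ℝ] ℝ) (θ z : E) :
    |fderiv ℝ (fderiv ℝ fun θ => ∑ q, w q * logisticLoss (p q) (A q θ + b q)) θ z z|
      ≤ 1 / 4 * ∑ q, w q * A q z ^ 2 := by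
  have hσ : ∀ t, 0 ≤ sigmoid t * (1 - sigmoid t) := fun t =>
    mul_nonneg (sigmoid_nonneg t) (sub_nonneg.2 (sigmoid_le_one t))
  rw [fderiv_fderiv_sum_logisticLoss_apply, mul_sum,
    abs_of_nonneg (sum_nonneg fun q _ => mul_nonneg (mul_nonneg (hw q) (hσ _)) (sq_nonneg _))]
  refine sum_le_sum fun q _ => ?_
  rw [show 1 / 4 * (w q * A q z ^ 2) = w q * (1 / 4) * A q z ^ 2 by ring]
  gcongr
  · exact hw q
  · exact sigmoid_mul_one_sub_sigmoid_le _

end SecondDerivative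

theorem log_softmax_div_sub_log_softmax_div {Y : Type*} [Fintype Y] (θ : Y → ℝ) {ρ : Y → ℝ}
    {y₁ y₂ : Y} (h₁ : ρ y₁ ≠ 0) (h₂ : ρ y₂ ≠ 0) :
    log (exp (θ y₁) / (∑ y, exp (θ y)) / ρ y₁) - log (exp (θ y₂) / (∑ y, exp (θ y)) / ρ y₂)
      = θ y₁ - θ y₂ + (log (ρ y₂) - log (ρ y₁)) := by
  have hZ : ∑ y, exp (θ y) ≠ 0 := (sum_pos (fun y _ => exp_pos (θ y)) ⟨y₁, mem_univ _⟩).ne'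
  have hq : ∀ y, exp (θ y) / ∑ y, exp (θ y) ≠ 0 := fun y => div_ne_zero (exp_pos _).ne' hZ
  rw [log_div (hq y₁) h₁, log_div (hq y₂) h₂, log_div (exp_pos _).ne' hZ,
    log_div (exp_pos _).ne' hZ, log_exp, log_exp]
  ring

-- The left side is `2 (E_w[u²] - E_w[u]²)`, twice a variance.
theorem sum_sum_mul_mul_sub_sq_le {Y : Type*} [Fintype Y] {w : Y → ℝ} (hw : ∑ y, w y = 1)
    (u : Y → ℝ) :
    ∑ y₁, ∑ y₂, w y₁ * w y₂ * (u y₁ - u y₂) ^ 2 ≤ 2 * ∑ y, w y * u y ^ 2 := by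
  have hexpand : ∀ y₁ y₂, w y₁ * w y₂ * (u y₁ - u y₂) ^ 2
      = w y₁ * u y₁ ^ 2 * w y₂ + w y₁ * (w y₂ * u y₂ ^ 2)
        - 2 * (w y₁ * u y₁) * (w y₂ * u y₂) := by
    intros; ring
  simp only [hexpand, sum_add_distrib, sum_sub_distrib, ← mul_sum, ← sum_mul, hw]
  nlinarith [sq_nonneg (∑ y, w y * u y)]

theorem le_one_of_sum_eq_one {ι : Type*} [Fintype ι] {f : ι → ℝ} (h0 : ∀ i, 0 ≤ f i)
    (h1 : ∑ i, f i = 1) (i : ι) : f i ≤ 1 :=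
  h1 ▸ single_le_sum (fun j _ => h0 j) (mem_univ i)

section Margin

variable {X Y : Type*}

/-- The linear part `θ ↦ (θ(x,y₁) - θ(x,y₂))/τ` of the DPO margin `h̄_θ(x,y₁,y₂)`. -/
noncomputable def logitMargin (τ : ℝ) (q : X × Y × Y) : (X × Y → ℝ) →L[ℝ] ℝ :=
  τ⁻¹ • (ContinuousLinearMap.proj (R := ℝ) (φ := fun _ => ℝ) (q.1, q.2.1)
    - ContinuousLinearMap.proj (q.1, q.2.2))

theorem logitMargin_apply (τ : ℝ) (q : X × Y × Y) (v : X × Y → ℝ) :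
    logitMargin τ q v = τ⁻¹ * (v (q.1, q.2.1) - v (q.1, q.2.2)) :=
  rfl

variable [Fintype X] [Fintype Y]

theorem sum_mul_mul_mul_sub_sq_le {D : X → ℝ} (hD0 : ∀ x, 0 ≤ D x) (hD1 : ∑ x, D x = 1)
    {w : X → Y → ℝ} (hw0 : ∀ x y, 0 ≤ w x y) (hw1 : ∀ x, ∑ y, w x y = 1) (z : X × Y → ℝ) :
    ∑ q : X × Y × Y, D q.1 * (w q.1 q.2.1 * w q.1 q.2.2) * (z (q.1, q.2.1) - z (q.1, q.2.2)) ^ 2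
      ≤ 2 * ∑ p, z p ^ 2 := by
  simp only [Fintype.sum_prod_type, mul_sum, mul_assoc]
  refine sum_le_sum fun x _ => ?_
  calc ∑ y₁, ∑ y₂, D x * (w x y₁ * (w x y₂ * (z (x, y₁) - z (x, y₂)) ^ 2))
      = D x * ∑ y₁, ∑ y₂, w x y₁ * w x y₂ * (z (x, y₁) - z (x, y₂)) ^ 2 := by
        simp only [mul_sum, mul_assoc]
    _ ≤ D x * (2 * ∑ y, w x y * z (x, y) ^ 2) :=
        mul_le_mul_of_nonneg_left (sum_sum_mul_mul_sub_sq_le (hw1 x) _) (hD0 x)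
    _ ≤ ∑ y, 2 * z (x, y) ^ 2 := by
        rw [mul_sum, mul_sum]
        refine sum_le_sum fun y _ => ?_
        have hDw : D x * w x y ≤ 1 := mul_le_one₀ (le_one_of_sum_eq_one hD0 hD1 x) (hw0 x y)
          (le_one_of_sum_eq_one (hw0 x) (hw1 x) y)
        nlinarith [sq_nonneg (z (x, y))]

theorem sum_mul_mul_mul_logitMargin_sq_le {D : X → ℝ} (hD0 : ∀ x, 0 ≤ D x)
    (hD1 : ∑ x, D x = 1) {w : X → Y → ℝ} (hw0 : ∀ x y, 0 ≤ w x y)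
    (hw1 : ∀ x, ∑ y, w x y = 1) (τ : ℝ) (z : X × Y → ℝ) :
    ∑ q : X × Y × Y, D q.1 * (w q.1 q.2.1 * w q.1 q.2.2) * logitMargin τ q z ^ 2
      ≤ 2 / τ ^ 2 * ∑ p, z p ^ 2 := by
  calc ∑ q : X × Y × Y, D q.1 * (w q.1 q.2.1 * w q.1 q.2.2) * logitMargin τ q z ^ 2
      = (τ ^ 2)⁻¹ * ∑ q : X × Y × Y,
          D q.1 * (w q.1 q.2.1 * w q.1 q.2.2) * (z (q.1, q.2.1) - z (q.1, q.2.2)) ^ 2 := by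
        rw [mul_sum]
        exact sum_congr rfl fun q _ => by rw [logitMargin_apply]; ring
    _ ≤ (τ ^ 2)⁻¹ * (2 * ∑ p, z p ^ 2) := by
        gcongr
        exact sum_mul_mul_mul_sub_sq_le hD0 hD1 hw0 hw1 z
    _ = 2 / τ ^ 2 * ∑ p, z p ^ 2 := by ring

end Margin

theorem dpo_loss_smooth_general
    {X Y : Type*} [Fintype X] [Fintype Y]
    (τ : ℝ)
    (D : X → ℝ) (hD0 : ∀ x, 0 ≤ D x) (hD1 : ∑ x : X, D x = 1)
    (πref π₀ : X → Y → ℝ)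
    (hπref0 : ∀ x y, 0 < πref x y)
    (hπ₀0 : ∀ x y, 0 < π₀ x y) (hπ₀1 : ∀ x, ∑ y : Y, π₀ x y = 1)
    (σ : ℝ → ℝ) (hσ : ∀ t, σ t = (1 + Real.exp (-t))⁻¹)
    (pstar : X → Y → Y → ℝ)
    (πθ : (X × Y → ℝ) → X → Y → ℝ)
    (hπθ : ∀ θ x y, πθ θ x y = Real.exp (θ (x, y)) / ∑ y' : Y, Real.exp (θ (x, y')))
    (hbar : (X × Y → ℝ) → X → Y → Y → ℝ)
    (hhbar : ∀ θ x y₁ y₂, hbar θ x y₁ y₂ =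
      (1 / τ) * (Real.log (πθ θ x y₁ / πref x y₁) - Real.log (πθ θ x y₂ / πref x y₂)))
    (L : (X × Y → ℝ) → ℝ)
    (hL : ∀ θ, L θ = -∑ x : X, D x * ∑ y₁ : Y, ∑ y₂ : Y,
      π₀ x y₁ * π₀ x y₂ *
        (pstar x y₁ y₂ * Real.log (σ (hbar θ x y₁ y₂)) +
         (1 - pstar x y₁ y₂) * Real.log (σ (-(hbar θ x y₁ y₂))))) :
    ∀ θ z : X × Y → ℝ,
      |fderiv ℝ (fderiv ℝ L) θ z z| ≤ (4 / τ ^ 2) * ∑ p : X × Y, z p ^ 2 := by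
  intro θ z
  have hσ' : σ = sigmoid := funext hσ
  have hbar_eq : ∀ θ x y₁ y₂, hbar θ x y₁ y₂ =
      logitMargin τ (x, y₁, y₂) θ + τ⁻¹ * (log (πref x y₂) - log (πref x y₁)) := by
    intro θ x y₁ y₂
    rw [hhbar, hπθ, hπθ, log_softmax_div_sub_log_softmax_div (fun y => θ (x, y))
      (hπref0 x y₁).ne' (hπref0 x y₂).ne', logitMargin_apply]
    ring
  have hL' : L = fun θ => ∑ q : X × Y × Y, D q.1 * (π₀ q.1 q.2.1 * π₀ q.1 q.2.2) *
      logisticLoss (pstar q.1 q.2.1 q.2.2)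
        (logitMargin τ q θ + τ⁻¹ * (log (πref q.1 q.2.2) - log (πref q.1 q.2.1))) := by
    funext θ
    simp only [hL, hbar_eq, hσ', logisticLoss, Fintype.sum_prod_type, mul_sum, ← sum_neg_distrib]
    exact sum_congr rfl fun x _ => sum_congr rfl fun y₁ _ => sum_congr rfl fun y₂ _ => by ring
  have hw : ∀ q : X × Y × Y, 0 ≤ D q.1 * (π₀ q.1 q.2.1 * π₀ q.1 q.2.2) := fun q =>
    mul_nonneg (hD0 _) (mul_nonneg (hπ₀0 _ _).le (hπ₀0 _ _).le)
  have hS : 0 ≤ 4 / τ ^ 2 * ∑ p : X × Y, z p ^ 2 := by positivity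
  rw [hL']
  calc _ ≤ 1 / 4 * ∑ q, D q.1 * (π₀ q.1 q.2.1 * π₀ q.1 q.2.2) * logitMargin τ q z ^ 2 :=
        abs_fderiv_fderiv_sum_logisticLoss_apply_le hw _ _ _ θ z
    _ ≤ 1 / 4 * (2 / τ ^ 2 * ∑ p, z p ^ 2) := by
        gcongr
        exact sum_mul_mul_mul_logitMargin_sq_le hD0 hD1 (fun x y => (hπ₀0 x y).le) hπ₀1 τ z
    _ ≤ 4 / τ ^ 2 * ∑ p, z p ^ 2 := by
        rw [show 1 / 4 * (2 / τ ^ 2 * ∑ p, z p ^ 2) = 1 / 8 * (4 / τ ^ 2 * ∑ p, z p ^ 2) by ring]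
        linarith

/-- The DPO loss of the softmax-parametrized tabular policy is
(4/τ²)-smooth: its second derivative satisfies
|D²L_DPO(θ)(z,z)| ≤ (4/τ²)·Σ_{x,y} z(x,y)² for all θ and z. -/
theorem dpo_loss_smooth
    {X Y : Type*} [Fintype X] [Fintype Y] [Nonempty X] [Nonempty Y]
    (r : X → Y → ℝ) (τ : ℝ) (hτ : 0 < τ)
    (D : X → ℝ) (hD0 : ∀ x, 0 ≤ D x) (hD1 : ∑ x : X, D x = 1)
    (πref π₀ : X → Y → ℝ)
    (hπref0 : ∀ x y, 0 < πref x y) (hπref1 : ∀ x, ∑ y : Y, πref x y = 1)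
    (hπ₀0 : ∀ x y, 0 < π₀ x y) (hπ₀1 : ∀ x, ∑ y : Y, π₀ x y = 1)
    (σ : ℝ → ℝ) (hσ : ∀ t, σ t = (1 + Real.exp (-t))⁻¹)
    (pstar : X → Y → Y → ℝ)
    (hpstar : ∀ x y₁ y₂, pstar x y₁ y₂ = σ (r x y₁ - r x y₂))
    (πθ : (X × Y → ℝ) → X → Y → ℝ)
    (hπθ : ∀ θ x y, πθ θ x y = Real.exp (θ (x, y)) / ∑ y' : Y, Real.exp (θ (x, y')))
    (hbar : (X × Y → ℝ) → X → Y → Y → ℝ)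
    (hhbar : ∀ θ x y₁ y₂, hbar θ x y₁ y₂ =
      (1 / τ) * (Real.log (πθ θ x y₁ / πref x y₁) - Real.log (πθ θ x y₂ / πref x y₂)))
    (L : (X × Y → ℝ) → ℝ)
    (hL : ∀ θ, L θ = -∑ x : X, D x * ∑ y₁ : Y, ∑ y₂ : Y,
      π₀ x y₁ * π₀ x y₂ *
        (pstar x y₁ y₂ * Real.log (σ (hbar θ x y₁ y₂)) +
         (1 - pstar x y₁ y₂) * Real.log (σ (-(hbar θ x y₁ y₂))))) :
    ∀ θ z : X × Y → ℝ,
      |fderiv ℝ (fderiv ℝ L) θ z z| ≤ (4 / τ ^ 2) * ∑ p : X × Y, z p ^ 2 :=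
  dpo_loss_smooth_general τ D hD0 hD1 πref π₀ hπref0 hπ₀0 hπ₀1 σ hσ pstar πθ hπθ hbar hhbar L hL
end

section
/- Consider the DPO loss L_DPO(θ) of the softmax-parametrized policy π_θ under the Bradley–Terry model p*(x,y₁,y₂) = σ(r(x,y₁) − r(x,y₂)), namely L_DPO(θ) = −Σ_{x∈X} 𝒟(x) Σ_{y₁,y₂∈Y} π₀(y₁|x)·π₀(y₂|x)·[p*(x,y₁,y₂)·log σ(h̄_θ(x,y₁,y₂)) + (1 − p*(x,y₁,y₂))·log σ(−h̄_θ(x,y₁,y₂))], where h̄_θ(x,y₁,y₂) = (1/τ)·(log(π_θ(y₁|x)/π_ref(y₁|x)) − log(π_θ(y₂|x)/π_ref(y₂|x))). If θ* : X × Y → ℝ satisfies π_{θ*}(y|x) = π̄^τ(y|x) for all x ∈ X and y ∈ Y (for instance θ*(x,y) = log π_ref(y|x) + τ·r(x,y)), then the gradient of L_DPO vanishes at θ*: D L_DPO(θ*) = 0. -/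
/-!
At `θ*` the implicit reward `h̄_{θ*}(x, y₁, y₂)` equals `r(x, y₁) - r(x, y₂)`, because the
log-ratio `log (π̄^τ / π_ref)` is `τ r` up to the `y`-independent shift `log Z'(x)`. Hence at `θ*`
every Bradley–Terry term is a cross entropy against its own true preference probability, which
by Gibbs' inequality is the smallest value it can take. So `θ*` is a global minimiser of the DPO
loss, and the derivative of a function vanishes at a local minimum.
-/

open Real

lemma mul_log_div_le_sub {p q : ℝ} (hp : 0 < p) (hq : 0 < q) : p * log (q / p) ≤ q - p :=
  calc p * log (q / p) ≤ p * (q / p - 1) :=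
        mul_le_mul_of_nonneg_left (log_le_sub_one_of_pos (by positivity)) hp.le
    _ = q - p := by field_simp

lemma mul_log_add_mul_log_one_sub_le {p q : ℝ} (hp₀ : 0 < p) (hp₁ : p < 1) (hq₀ : 0 < q)
    (hq₁ : q < 1) :
    p * log q + (1 - p) * log (1 - q) ≤ p * log p + (1 - p) * log (1 - p) := by
  have h₀ := mul_log_div_le_sub hp₀ hq₀
  have h₁ := mul_log_div_le_sub (sub_pos.2 hp₁) (sub_pos.2 hq₁)
  rw [log_div hq₀.ne' hp₀.ne'] at h₀
  rw [log_div (sub_pos.2 hq₁).ne' (sub_pos.2 hp₁).ne'] at h₁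
  linarith

lemma mul_log_sigmoid_add_mul_log_sigmoid_neg_le (s h : ℝ) :
    sigmoid s * log (sigmoid h) + (1 - sigmoid s) * log (sigmoid (-h)) ≤
      sigmoid s * log (sigmoid s) + (1 - sigmoid s) * log (sigmoid (-s)) := by
  rw [sigmoid_neg, sigmoid_neg]
  exact mul_log_add_mul_log_one_sub_le (sigmoid_pos s) (sigmoid_lt_one s) (sigmoid_pos h)
    (sigmoid_lt_one h)

lemma log_mul_exp_div_div_self {a Z : ℝ} (ha : 0 < a) (hZ : 0 < Z) (t : ℝ) :
    log (a * exp t / Z / a) = t - log Z := by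
  rw [div_div, mul_comm Z, ← div_div, mul_div_cancel_left₀ _ ha.ne',
    log_div (exp_pos t).ne' hZ.ne', log_exp]

theorem dpo_gradient_vanishes_at_posterior_boltzmann_general
    {X Y : Type*} [Fintype X] [Fintype Y]
    (r : X → Y → ℝ) (τ : ℝ) (hτ : 0 < τ)
    (D : X → ℝ) (hD0 : ∀ x, 0 ≤ D x)
    (πref π₀ : X → Y → ℝ)
    (hπref0 : ∀ x y, 0 < πref x y)
    (hπ₀0 : ∀ x y, 0 < π₀ x y)
    (σ : ℝ → ℝ) (hσ : ∀ t, σ t = (1 + Real.exp (-t))⁻¹)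
    (pstar : X → Y → Y → ℝ)
    (hpstar : ∀ x y₁ y₂, pstar x y₁ y₂ = σ (r x y₁ - r x y₂))
    (πθ : (X × Y → ℝ) → X → Y → ℝ)
    (hbar : (X × Y → ℝ) → X → Y → Y → ℝ)
    (hhbar : ∀ θ x y₁ y₂, hbar θ x y₁ y₂ =
      (1 / τ) * (Real.log (πθ θ x y₁ / πref x y₁) - Real.log (πθ θ x y₂ / πref x y₂)))
    (L : (X × Y → ℝ) → ℝ)
    (hL : ∀ θ, L θ = -∑ x : X, D x * ∑ y₁ : Y, ∑ y₂ : Y,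
      π₀ x y₁ * π₀ x y₂ *
        (pstar x y₁ y₂ * Real.log (σ (hbar θ x y₁ y₂)) +
         (1 - pstar x y₁ y₂) * Real.log (σ (-(hbar θ x y₁ y₂)))))
    (Z' : X → ℝ) (hZ' : ∀ x, Z' x = ∑ y' : Y, πref x y' * Real.exp (τ * r x y'))
    (πbar : X → Y → ℝ)
    (hπbar : ∀ x y, πbar x y = πref x y * Real.exp (τ * r x y) / Z' x)
    (θstar : X × Y → ℝ)
    (hθstar : ∀ x y, πθ θstar x y = πbar x y) :
    fderiv ℝ L θstar = 0 := by
  obtain rfl : σ = sigmoid := funext hσ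
  have hZ'_pos (x : X) (y : Y) : 0 < Z' x := by
    rw [hZ']
    exact Finset.sum_pos (fun y _ ↦ mul_pos (hπref0 x y) (exp_pos _)) ⟨y, Finset.mem_univ y⟩
  have hbar_star (x : X) (y₁ y₂ : Y) : hbar θstar x y₁ y₂ = r x y₁ - r x y₂ := by
    simp only [hhbar, hθstar, hπbar, log_mul_exp_div_div_self (hπref0 _ _) (hZ'_pos x y₁)]
    field_simp
    ring
  have hmin (θ : X × Y → ℝ) : L θstar ≤ L θ := by
    simp only [hL, neg_le_neg_iff, hpstar, hbar_star]
    gcongr ∑ x, D x * ∑ y₁, ∑ y₂, _ * ?_ with x _ y₁ _ y₂ _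
    · exact hD0 x
    · exact mul_nonneg (hπ₀0 x y₁).le (hπ₀0 x y₂).le
    · exact mul_log_sigmoid_add_mul_log_sigmoid_neg_le _ _
  exact IsLocalMin.fderiv_eq_zero (Filter.Eventually.of_forall hmin)

/-- If the softmax-parametrized policy at θ* equals the posterior
Boltzmann policy π̄^τ, then the gradient of the DPO loss vanishes at θ*. -/
theorem dpo_gradient_vanishes_at_posterior_boltzmann
    {X Y : Type*} [Fintype X] [Fintype Y] [Nonempty X] [Nonempty Y]
    (r : X → Y → ℝ) (τ : ℝ) (hτ : 0 < τ)
    (D : X → ℝ) (hD0 : ∀ x, 0 ≤ D x) (hD1 : ∑ x : X, D x = 1)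
    (πref π₀ : X → Y → ℝ)
    (hπref0 : ∀ x y, 0 < πref x y) (hπref1 : ∀ x, ∑ y : Y, πref x y = 1)
    (hπ₀0 : ∀ x y, 0 < π₀ x y) (hπ₀1 : ∀ x, ∑ y : Y, π₀ x y = 1)
    (σ : ℝ → ℝ) (hσ : ∀ t, σ t = (1 + Real.exp (-t))⁻¹)
    (pstar : X → Y → Y → ℝ)
    (hpstar : ∀ x y₁ y₂, pstar x y₁ y₂ = σ (r x y₁ - r x y₂))
    (πθ : (X × Y → ℝ) → X → Y → ℝ)
    (hπθ : ∀ θ x y, πθ θ x y = Real.exp (θ (x, y)) / ∑ y' : Y, Real.exp (θ (x, y')))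
    (hbar : (X × Y → ℝ) → X → Y → Y → ℝ)
    (hhbar : ∀ θ x y₁ y₂, hbar θ x y₁ y₂ =
      (1 / τ) * (Real.log (πθ θ x y₁ / πref x y₁) - Real.log (πθ θ x y₂ / πref x y₂)))
    (L : (X × Y → ℝ) → ℝ)
    (hL : ∀ θ, L θ = -∑ x : X, D x * ∑ y₁ : Y, ∑ y₂ : Y,
      π₀ x y₁ * π₀ x y₂ *
        (pstar x y₁ y₂ * Real.log (σ (hbar θ x y₁ y₂)) +
         (1 - pstar x y₁ y₂) * Real.log (σ (-(hbar θ x y₁ y₂)))))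
    (Z' : X → ℝ) (hZ' : ∀ x, Z' x = ∑ y' : Y, πref x y' * Real.exp (τ * r x y'))
    (πbar : X → Y → ℝ)
    (hπbar : ∀ x y, πbar x y = πref x y * Real.exp (τ * r x y) / Z' x)
    (θstar : X × Y → ℝ)
    (hθstar : ∀ x y, πθ θstar x y = πbar x y) :
    fderiv ℝ L θstar = 0 :=
  dpo_gradient_vanishes_at_posterior_boltzmann_general r τ hτ D hD0 πref π₀ hπref0 hπ₀0 σ hσ pstar
    hpstar πθ hbar hhbar L hL Z' hZ' πbar hπbar θstar hθstar
end

section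
/- Consider the Reverse-BDA loss of the softmax-parametrized policy, L(θ) = −Σ_{x∈X} 𝒟(x) · Σ_{y∈Y} π^τ(y|x)·log π_θ(y|x), as a function of θ : X × Y → ℝ. Then L is 2-smooth: for every θ and every direction z : X × Y → ℝ, the second derivative of L at θ satisfies |D²L(θ)(z,z)| ≤ 2·Σ_{x,y} z(x,y)². -/
/-!
Because `π^τ(·|x)` sums to one, the gradient of the loss is
`Σ_x 𝒟(x) Σ_y (π_θ(y|x) - π^τ(y|x)) e_(x,y)`, and differentiating the softmax once more gives
`D²L(θ)(z,z) = Σ_x 𝒟(x) Var_{π_θ(·|x)} z(x,·)`. A variance under a probability vector lies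
between `0` and `Σ_y z(x,y)²`, and `𝒟(x) ≤ 1`, so in fact `0 ≤ D²L(θ)(z,z) ≤ Σ z²`.
-/

open Finset Real

section WeightedSums

variable {ι : Type*} [Fintype ι] {s : ι → ℝ}

theorem sum_mul_le_sum_of_sum_eq_one (hs0 : ∀ i, 0 ≤ s i) (hs1 : ∑ i, s i = 1) {a : ι → ℝ}
    (ha : ∀ i, 0 ≤ a i) : ∑ i, s i * a i ≤ ∑ i, a i :=
  sum_le_sum fun i _ => mul_le_of_le_one_left (ha i)
    (hs1 ▸ single_le_sum (fun j _ => hs0 j) (mem_univ i))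

theorem sq_sum_mul_le_sum_mul_sq (hs0 : ∀ i, 0 ≤ s i) (hs1 : ∑ i, s i = 1) (v : ι → ℝ) :
    (∑ i, s i * v i) ^ 2 ≤ ∑ i, s i * v i ^ 2 := by
  simpa only [hs1, one_mul] using sum_sq_le_sum_mul_sum_of_sq_le_mul univ (r := fun i => s i * v i)
    (fun i _ => hs0 i) (fun i _ => mul_nonneg (hs0 i) (sq_nonneg (v i)))
    (fun i _ => le_of_eq (by ring))

theorem sum_mul_sq_sub_sq_sum_mul_mem_Icc (hs0 : ∀ i, 0 ≤ s i) (hs1 : ∑ i, s i = 1)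
    (v : ι → ℝ) :
    ∑ i, s i * v i ^ 2 - (∑ i, s i * v i) ^ 2 ∈ Set.Icc 0 (∑ i, v i ^ 2) :=
  ⟨sub_nonneg.2 (sq_sum_mul_le_sum_mul_sq hs0 hs1 v),
    (sub_le_self _ (sq_nonneg _)).trans
      (sum_mul_le_sum_of_sum_eq_one hs0 hs1 fun i => sq_nonneg (v i))⟩

end WeightedSums

theorem fderiv_fderiv_apply_of_hasFDerivAt {𝕜 E F : Type*} [NontriviallyNormedField 𝕜]
    [NormedAddCommGroup E] [NormedSpace 𝕜 E] [NormedAddCommGroup F] [NormedSpace 𝕜 F]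
    {f : E → F} {f' : E → E →L[𝕜] F} (hf : ∀ u, HasFDerivAt f (f' u) u) {θ : E}
    (hf' : DifferentiableAt 𝕜 f' θ) {z : E} {g : E →L[𝕜] F}
    (hg : HasFDerivAt (fun u => f' u z) g θ) :
    fderiv 𝕜 (fderiv 𝕜 f) θ z z = g z := by
  rw [funext fun u => (hf u).fderiv, ← hg.fderiv,
    fderiv_clm_apply hf' (differentiableAt_const z)]
  simp

section CrossEntropy

variable {X Y : Type*}

noncomputable def coord (p : X × Y) : (X × Y → ℝ) →L[ℝ] ℝ :=
  ContinuousLinearMap.proj p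

@[simp]
theorem coord_apply (p : X × Y) (θ : X × Y → ℝ) : coord p θ = θ p :=
  rfl

variable [Fintype Y]

noncomputable def softmax (θ : X × Y → ℝ) (x : X) (y : Y) : ℝ :=
  exp (θ (x, y)) / ∑ y', exp (θ (x, y'))

theorem sum_exp_pos [Nonempty Y] (θ : X × Y → ℝ) (x : X) : 0 < ∑ y, exp (θ (x, y)) :=
  sum_pos (fun _ _ => exp_pos _) univ_nonempty

theorem softmax_pos [Nonempty Y] (θ : X × Y → ℝ) (x : X) (y : Y) : 0 < softmax θ x y :=
  div_pos (exp_pos _) (sum_exp_pos θ x)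

theorem sum_softmax [Nonempty Y] (θ : X × Y → ℝ) (x : X) : ∑ y, softmax θ x y = 1 := by
  simp_rw [softmax, ← sum_div]
  exact div_self (sum_exp_pos θ x).ne'

variable [Fintype X]

noncomputable def crossEntropy (D : X → ℝ) (w : X → Y → ℝ) (θ : X × Y → ℝ) : ℝ :=
  -∑ x, D x * ∑ y, w x y * log (softmax θ x y)

noncomputable def crossEntropyGrad (D : X → ℝ) (w : X → Y → ℝ) (θ : X × Y → ℝ) :
    (X × Y → ℝ) →L[ℝ] ℝ :=
  ∑ x, D x • ∑ y, (softmax θ x y - w x y) • coord (x, y)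

variable [Nonempty Y]

theorem hasFDerivAt_softmax (θ : X × Y → ℝ) (x : X) (y : Y) :
    HasFDerivAt (fun u => softmax u x y)
      (softmax θ x y • (coord (x, y) - ∑ y', softmax θ x y' • coord (x, y'))) θ := by
  have hexp : ∀ y', HasFDerivAt (fun u : X × Y → ℝ => exp (u (x, y')))
      (exp (θ (x, y')) • coord (x, y')) θ := fun y' => (coord (x, y')).hasFDerivAt.exp
  have hZinv := (hasDerivAt_inv (sum_exp_pos θ x).ne').comp_hasFDerivAt θ
    (HasFDerivAt.fun_sum (u := univ) fun y' _ => hexp y')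
  refine ((hexp y).mul hZinv).congr_fderiv ?_
  ext z
  simp only [softmax, smul_apply, add_apply, sub_apply, _root_.sum_apply, coord_apply,
    smul_eq_mul, Function.comp_apply, div_mul_eq_mul_div, ← sum_div]
  field_simp
  ring

theorem hasFDerivAt_log_softmax (θ : X × Y → ℝ) (x : X) (y : Y) :
    HasFDerivAt (fun u => log (softmax u x y))
      (coord (x, y) - ∑ y', softmax θ x y' • coord (x, y')) θ := by
  refine ((hasFDerivAt_softmax θ x y).log (softmax_pos θ x y).ne').congr_fderiv ?_
  rw [smul_smul, inv_mul_cancel₀ (softmax_pos θ x y).ne', one_smul]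

theorem differentiable_crossEntropyGrad (D : X → ℝ) (w : X → Y → ℝ) :
    Differentiable ℝ (crossEntropyGrad D w) := fun θ => by
  have hsoftmax := fun x y => (hasFDerivAt_softmax θ x y).differentiableAt
  unfold crossEntropyGrad
  fun_prop

variable (D : X → ℝ) {w : X → Y → ℝ}

theorem hasFDerivAt_crossEntropy (hw : ∀ x, ∑ y, w x y = 1) (θ : X × Y → ℝ) :
    HasFDerivAt (crossEntropy D w) (crossEntropyGrad D w θ) θ := by
  refine (HasFDerivAt.fun_sum (u := univ) fun x _ => (HasFDerivAt.fun_sum (u := univ) fun y _ =>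
    (hasFDerivAt_log_softmax θ x y).const_mul (w x y)).const_mul (D x)).neg.congr_fderiv ?_
  ext z
  simp only [crossEntropyGrad, neg_apply, smul_apply, sub_apply, _root_.sum_apply,
    coord_apply, smul_eq_mul, ← sum_neg_distrib]
  refine sum_congr rfl fun x _ => ?_
  have hx : ∑ y, w x y * (z (x, y) - ∑ y', softmax θ x y' * z (x, y')) =
      -∑ y, (softmax θ x y - w x y) * z (x, y) := by
    simp only [mul_sub, sub_mul, sum_sub_distrib, ← sum_mul, hw x, one_mul]
    ring
  rw [hx, mul_neg, neg_neg]

theorem fderiv_fderiv_crossEntropy_apply (hw : ∀ x, ∑ y, w x y = 1) (θ z : X × Y → ℝ) :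
    fderiv ℝ (fderiv ℝ (crossEntropy D w)) θ z z =
      ∑ x, D x * (∑ y, softmax θ x y * z (x, y) ^ 2 - (∑ y, softmax θ x y * z (x, y)) ^ 2) := by
  have hg : HasFDerivAt (fun u => crossEntropyGrad D w u z)
      (∑ x, D x • ∑ y, z (x, y) • softmax θ x y •
        (coord (x, y) - ∑ y', softmax θ x y' • coord (x, y'))) θ := by
    simp only [crossEntropyGrad, smul_apply, _root_.sum_apply, coord_apply, smul_eq_mul]
    exact HasFDerivAt.fun_sum fun x _ => (HasFDerivAt.fun_sum fun y _ =>
      ((hasFDerivAt_softmax θ x y).sub_const (w x y)).mul_const (z (x, y))).const_mul (D x)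
  rw [fderiv_fderiv_apply_of_hasFDerivAt (hasFDerivAt_crossEntropy D hw)
    (differentiable_crossEntropyGrad D w θ) hg]
  simp only [smul_apply, sub_apply, _root_.sum_apply, coord_apply, smul_eq_mul]
  refine sum_congr rfl fun x _ => ?_
  have hexpand : ∀ y,
      z (x, y) * (softmax θ x y * (z (x, y) - ∑ y', softmax θ x y' * z (x, y'))) =
        softmax θ x y * z (x, y) ^ 2 -
          softmax θ x y * z (x, y) * ∑ y', softmax θ x y' * z (x, y') := fun y => by ring
  simp only [hexpand, sum_sub_distrib, ← sum_mul, sq (∑ y, softmax θ x y * z (x, y))]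

theorem abs_fderiv_fderiv_crossEntropy_le {D : X → ℝ} (hD0 : ∀ x, 0 ≤ D x)
    (hD1 : ∑ x, D x = 1) (hw : ∀ x, ∑ y, w x y = 1) (θ z : X × Y → ℝ) :
    |fderiv ℝ (fderiv ℝ (crossEntropy D w)) θ z z| ≤ ∑ p : X × Y, z p ^ 2 := by
  have hvar := fun x => sum_mul_sq_sub_sq_sum_mul_mem_Icc (fun y => (softmax_pos θ x y).le)
    (sum_softmax θ x) fun y => z (x, y)
  rw [fderiv_fderiv_crossEntropy_apply D hw,
    abs_of_nonneg (sum_nonneg fun x _ => mul_nonneg (hD0 x) (hvar x).1), Fintype.sum_prod_type]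
  calc _ ≤ ∑ x, D x * ∑ y, z (x, y) ^ 2 :=
        sum_le_sum fun x _ => mul_le_mul_of_nonneg_left (hvar x).2 (hD0 x)
    _ ≤ _ := sum_mul_le_sum_of_sum_eq_one hD0 hD1 fun x => sum_nonneg fun y _ => sq_nonneg _

end CrossEntropy

theorem reverse_bda_loss_smooth_general
    {X Y : Type*} [Fintype X] [Fintype Y] [Nonempty Y]
    (r : X → Y → ℝ) (τ : ℝ)
    (D : X → ℝ) (hD0 : ∀ x, 0 ≤ D x) (hD1 : ∑ x : X, D x = 1)
    (πt : X → Y → ℝ)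
    (hπt : ∀ x y, πt x y = Real.exp (τ * r x y) / ∑ y' : Y, Real.exp (τ * r x y'))
    (πθ : (X × Y → ℝ) → X → Y → ℝ)
    (hπθ : ∀ θ x y, πθ θ x y = Real.exp (θ (x, y)) / ∑ y' : Y, Real.exp (θ (x, y')))
    (L : (X × Y → ℝ) → ℝ)
    (hL : ∀ θ, L θ = -∑ x : X, D x * ∑ y : Y, πt x y * Real.log (πθ θ x y)) :
    ∀ θ z : X × Y → ℝ,
      |fderiv ℝ (fderiv ℝ L) θ z z| ≤ 2 * ∑ p : X × Y, z p ^ 2 := by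
  have hπt1 : ∀ x, ∑ y, πt x y = 1 := fun x => by
    simpa only [softmax, hπt] using sum_softmax (fun p : X × Y => τ * r p.1 p.2) x
  have hL' : L = crossEntropy D πt :=
    funext fun θ => by simp only [hL, hπθ, crossEntropy, softmax]
  intro θ z
  rw [hL']
  have hz : 0 ≤ ∑ p : X × Y, z p ^ 2 := sum_nonneg fun p _ => sq_nonneg _
  linarith [abs_fderiv_fderiv_crossEntropy_le hD0 hD1 hπt1 θ z]

/-- The Reverse-BDA loss of the softmax-parametrized policy is 2-smooth:
|D²L(θ)(z,z)| ≤ 2·Σ_{x,y} z(x,y)² for all θ and z. -/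
theorem reverse_bda_loss_smooth
    {X Y : Type*} [Fintype X] [Fintype Y] [Nonempty X] [Nonempty Y]
    (r : X → Y → ℝ) (τ : ℝ) (hτ : 0 < τ)
    (D : X → ℝ) (hD0 : ∀ x, 0 ≤ D x) (hD1 : ∑ x : X, D x = 1)
    (πt : X → Y → ℝ)
    (hπt : ∀ x y, πt x y = Real.exp (τ * r x y) / ∑ y' : Y, Real.exp (τ * r x y'))
    (πθ : (X × Y → ℝ) → X → Y → ℝ)
    (hπθ : ∀ θ x y, πθ θ x y = Real.exp (θ (x, y)) / ∑ y' : Y, Real.exp (θ (x, y')))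
    (L : (X × Y → ℝ) → ℝ)
    (hL : ∀ θ, L θ = -∑ x : X, D x * ∑ y : Y, πt x y * Real.log (πθ θ x y)) :
    ∀ θ z : X × Y → ℝ,
      |fderiv ℝ (fderiv ℝ L) θ z z| ≤ 2 * ∑ p : X × Y, z p ^ 2 :=
  reverse_bda_loss_smooth_general r τ D hD0 hD1 πt hπt πθ hπθ L hL
end
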